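/- In the commit-frame chaining scheme, if each to-be-reclaimed region's entries across nested commit frames form a chain (each entry stores a pointer to the region and the previous entry address), and the reclaim operation nulls out every entry in the chain, then each region is reclaimed at most once: the invariant 'a region's handle appears as a non-null entry in a commit frame iff the region has not yet been reclaimed' is preserved by both the reclaim operation and the commit-point loop that reclaims regions with non-null entries. -/

import Mathlib

theorem exists_ite_eq_some_iff {α ι : Type*} [DecidableEq α] (f : ι → Option α) (a b : α) :
    (∃ i, (if f i = some a then none else f i) = some b) ↔ (∃ i, f i = some b) ∧ b ≠ a := by
  constructor
  · rintro ⟨i, hi⟩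
    split_ifs at hi with ha
    exact ⟨⟨i, hi⟩, fun hba => ha (hba ▸ hi)⟩
  · rintro ⟨⟨i, hi⟩, hba⟩
    exact ⟨i, by rw [if_neg (by simpa [hi] using hba), hi]⟩

/-- In the commit-frame chaining scheme, the invariant "a region's handle
appears as a non-null entry in some commit frame iff the region has not yet
been reclaimed" is preserved by the reclaim operation, which marks the region
reclaimed and nulls out every entry in its chain (all entries holding its
handle); consequently each region is reclaimed at most once: any region with
a non-null entry has not yet been reclaimed, and after reclaiming it the
invariant holds for the new state. -/
theorem commit_reclaim_at_most_once {Region Entry : Type*} [DecidableEq Region]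
    (reclaimed : Set Region) (entries : Entry → Option Region)
    (hinv : ∀ r, (∃ e, entries e = some r) ↔ r ∉ reclaimed)
    (r : Region) (hpre : ∃ e, entries e = some r) :
    r ∉ reclaimed ∧
    (∀ r', (∃ e, (if entries e = some r then none else entries e) = some r') ↔
        r' ∉ (reclaimed ∪ {r})) := by
  refine ⟨(hinv r).mp hpre, fun r' => ?_⟩
  rw [exists_ite_eq_some_iff, hinv r', Set.mem_union, Set.mem_singleton_iff, not_or]
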